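/- Let D be a digraph obtained from a tournament by deleting the edges of two disjoint stars with centers x and y (with x→y), whose vertex sets cover all of V(D). If every missing edge has positive in-degree and positive out-degree in the dependency digraph (so that every leaf b of S_y satisfies b→x and every leaf a of S_x satisfies y→a), then D has at least two vertices with the second neighborhood property. -/

import Mathlib

/-!
The hypothesis `δ(Δ) > 0` forces `y → a` for every leaf `a` of the star at `x` and `b → x` for
every leaf `b` of the star at `y`: a missing edge `pq` losing to `xa` (resp. `yb`) has an end in
`{x, y}`, and ruling out the other placements leaves `y → a` (resp. `b → x`). Hence
`N⁺(x) = {y}`, while `x` reaches the leaves of its star through `y`, so `x` has the SNP.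

The remaining vertices span a tournament, and by the Havet–Thomassé argument the last vertex `u`
of a median order of it has, inside it, at least as many second out-neighbours as out-neighbours.
Outside it, a leaf `u` at `x` has no out-neighbour (it misses `x`, and `y → u`), and a leaf `u`
at `y` has the single out-neighbour `x` and the second out-neighbour `y`.
-/

variable {V : Type*}

/-- Out-neighborhood of `v`. -/
def Nplus (A : V → V → Prop) (v : V) : Set V := {u | A v u}

/-- In-neighborhood of `v`. -/
def Nminus (A : V → V → Prop) (v : V) : Set V := {u | A u v}

/-- Second out-neighborhood: vertices at directed distance exactly 2 from `v`. -/
def Npp (A : V → V → Prop) (v : V) : Set V :=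
  {u | u ≠ v ∧ ¬ A v u ∧ ∃ w, A v w ∧ A w u}

/-- The second neighborhood property. -/
def SNP (A : V → V → Prop) (v : V) : Prop := (Nplus A v).ncard ≤ (Npp A v).ncard

/-- A digraph (given by its arc relation) has no digons: no 2-cycles (this also rules out loops when stated for `u = v`). -/
def NoDigons (A : V → V → Prop) : Prop := ∀ u v, ¬ (A u v ∧ A v u)

/-- A tournament: an orientation of a complete graph. -/
def IsTournament (A : V → V → Prop) : Prop :=
  (∀ v, ¬ A v v) ∧ ∀ u v : V, u ≠ v → (A u v ↔ ¬ A v u)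

/-- `u v` is a missing edge: distinct and non-adjacent. -/
def MissingEdge (A : V → V → Prop) (u v : V) : Prop := u ≠ v ∧ ¬ A u v ∧ ¬ A v u

/-- `x₁y₁` loses to `x₂y₂` (with this labelling of endpoints). -/
def LosesAt (A : V → V → Prop) (x₁ y₁ x₂ y₂ : V) : Prop :=
  A x₁ x₂ ∧ ¬ A x₁ y₂ ∧ y₂ ∉ Npp A x₁ ∧ A y₁ y₂ ∧ ¬ A y₁ x₂ ∧ x₂ ∉ Npp A y₁

/-- The losing relation between (unordered) missing edges: the arcs of the dependency digraph. -/
def EdgeLoses (A : V → V → Prop) (e e' : Sym2 V) : Prop :=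
  ∃ x₁ y₁ x₂ y₂, e = s(x₁, y₁) ∧ e' = s(x₂, y₂) ∧
    MissingEdge A x₁ y₁ ∧ MissingEdge A x₂ y₂ ∧ LosesAt A x₁ y₁ x₂ y₂

lemma NoDigons.irrefl {T : V → V → Prop} (hT : NoDigons T) (v : V) : ¬ T v v :=
  fun h => hT v v ⟨h, h⟩

lemma mem_npp_of_arc_of_arc {T : V → V → Prop} (hT : NoDigons T) {u w z : V}
    (hzu : T z u) (huw : T u w) (hwz : T w z) : z ∈ Npp T u :=
  ⟨fun h => hT.irrefl u (h ▸ hzu), fun h => hT u z ⟨h, hzu⟩, w, huw, hwz⟩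

lemma List.Nodup.ncard_inter_setOf_mem {l : List V} (hl : l.Nodup) (S : Set V)
    [DecidablePred (· ∈ S)] : (S ∩ {z | z ∈ l}).ncard = l.countP (· ∈ S) := by
  classical
  rw [← hl.card_eq_countP, ← Set.ncard_coe_finset, Finset.coe_filter]
  congr 1
  ext z
  simp [and_comm]

section MedianOrder

variable (T : V → V → Prop) [DecidableRel T]

def forwardArcs : List V → ℕ
  | [] => 0
  | a :: l => l.countP (fun b => T a b) + forwardArcs l

def crossArcs (s t : List V) : ℕ := (s.map fun a => t.countP (fun b => T a b)).sum

def IsMedianOrder (l : List V) : Prop := ∀ l', l'.Perm l → forwardArcs T l' ≤ forwardArcs T l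

variable {T}

lemma forwardArcs_append (s t : List V) :
    forwardArcs T (s ++ t) = forwardArcs T s + crossArcs T s t + forwardArcs T t := by
  induction s with
  | nil => simp [forwardArcs, crossArcs]
  | cons a s ih =>
    simp only [List.cons_append, forwardArcs, List.countP_append, ih, crossArcs, List.map_cons,
      List.sum_cons]
    omega

lemma crossArcs_perm_left {s s' : List V} (h : s.Perm s') (t : List V) :
    crossArcs T s t = crossArcs T s' t :=
  (h.map _).sum_eq

lemma crossArcs_perm_right (s : List V) {t t' : List V} (h : t.Perm t') :
    crossArcs T s t = crossArcs T s t' := by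
  simp only [crossArcs, h.countP_eq]

lemma crossArcs_singleton_right (s : List V) (x : V) :
    crossArcs T s [x] = s.countP (fun a => T a x) := by
  induction s with
  | nil => rfl
  | cons a s ih => simp [crossArcs, List.countP_cons, ← ih]; omega

variable (T) in
lemma exists_perm_isMedianOrder (l : List V) : ∃ l', l'.Perm l ∧ IsMedianOrder T l' := by
  classical
  obtain ⟨l', hl', hmax⟩ :=
    l.permutations.toFinset.exists_max_image (forwardArcs T) ⟨l, by simp⟩
  have hl'l : l'.Perm l := by simpa using hl'
  exact ⟨l', hl'l, fun l'' h => hmax l'' (by simpa using h.trans hl'l)⟩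

namespace IsMedianOrder

lemma of_append_left {s t : List V} (h : IsMedianOrder T (s ++ t)) : IsMedianOrder T s := by
  intro s' hs'
  have := h (s' ++ t) (hs'.append_right t)
  rw [forwardArcs_append, forwardArcs_append, crossArcs_perm_left hs'] at this
  omega

lemma of_append_right {s t : List V} (h : IsMedianOrder T (s ++ t)) : IsMedianOrder T t := by
  intro t' ht'
  have := h (s ++ t') (ht'.append_left s)
  rw [forwardArcs_append, forwardArcs_append, crossArcs_perm_right s ht'] at this
  omega

lemma countP_out_le_countP_in {l : List V} {x : V} (h : IsMedianOrder T (l ++ [x])) :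
    l.countP (fun a => T x a) ≤ l.countP (fun a => T a x) := by
  have := h (x :: l) (List.perm_append_singleton x l).symm
  rw [forwardArcs_append, crossArcs_singleton_right] at this
  simp only [forwardArcs, List.countP_nil] at this
  omega

/- In `q`, out-neighbours of `u` are out-neighbours of `b` and in-neighbours of `b` are
in-neighbours of `u`, as otherwise `b ∈ N⁺⁺(u)`; the median order gives
`|N⁺(b) ∩ q| ≤ |N⁻(b) ∩ q|`. -/
open Classical in
lemma countP_out_le_countP_npp_of_prefix (hT : NoDigons T) {q r : List V} {b u : V}
    (hl : IsMedianOrder T (q ++ b :: r)) (hadj : (q ++ b :: r).Pairwise fun v w => T v w ∨ T w v)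
    (hu : u ∈ r) (hbu : T b u) (hb : b ∉ Npp T u) (hq : ∀ a ∈ q, T a u → a ∈ Npp T u) :
    q.countP (fun a => T u a) ≤ q.countP (fun a => a ∈ Npp T u) := by
  have hadj_q : ∀ a ∈ q, ∀ c ∈ b :: r, T a c ∨ T c a := (List.pairwise_append.1 hadj).2.2
  have hmed : IsMedianOrder T (q ++ [b]) := of_append_left (t := r) (by simpa using hl)
  calc q.countP (fun a => T u a)
      ≤ q.countP (fun a => T b a) := by
        refine List.countP_mono_left fun a ha hua => ?_
        simp only [decide_eq_true_eq] at hua ⊢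
        refine (hadj_q a ha b (by simp)).resolve_left fun hab => hb ?_
        exact mem_npp_of_arc_of_arc hT hbu hua hab
    _ ≤ q.countP (fun a => T a b) := hmed.countP_out_le_countP_in
    _ ≤ q.countP (fun a => a ∈ Npp T u) := by
        refine List.countP_mono_left fun a ha hab => ?_
        simp only [decide_eq_true_eq] at hab ⊢
        refine hq a ha ((hadj_q a ha u (by simp [hu])).resolve_right fun hua => hb ?_)
        exact mem_npp_of_arc_of_arc hT hbu hua hab

/- Cut `l` at its first in-neighbour `b` of `u` outside `N⁺⁺(u)`: the part before `b` is the
previous lemma, the part after `b` is a shorter median order, and `b` counts on neither side. -/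
open Classical in
theorem countP_out_le_countP_npp (hT : NoDigons T) {l : List V} {u : V}
    (hl : IsMedianOrder T (l ++ [u])) (hadj : (l ++ [u]).Pairwise fun v w => T v w ∨ T w v) :
    l.countP (fun a => T u a) ≤ l.countP (fun a => a ∈ Npp T u) := by
  induction hn : l.length using Nat.strong_induction_on generalizing l with
  | _ n ih =>
    set good : V → Bool := fun z => ¬ (T z u ∧ z ∉ Npp T u) with hgood
    cases hd : l.dropWhile good with
    | nil =>
      rw [List.dropWhile_eq_nil_iff] at hd
      refine hl.countP_out_le_countP_in.trans (List.countP_mono_left fun a ha hau => ?_)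
      simpa [hgood, hau] using hd a ha
    | cons b s =>
      have hsplit : l = l.takeWhile good ++ b :: s := by
        rw [← hd, List.takeWhile_append_dropWhile]
      set q := l.takeWhile good
      have hb : ¬ good b := by
        simpa [hd] using List.head_dropWhile_not good (l := l) (by simp [hd])
      simp only [hgood, decide_eq_true_eq, not_not] at hb
      rw [hsplit] at hl hadj ⊢
      simp only [List.append_assoc, List.cons_append] at hl hadj
      have hs : s.countP (fun a => T u a) ≤ s.countP (fun a => a ∈ Npp T u) :=
        ih s.length (by rw [← hn, hsplit]; simp; omega)
          (of_append_right (s := q ++ [b]) (by simpa using hl))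
          (hadj.sublist ((List.sublist_cons_self _ _).trans (List.sublist_append_right _ _))) rfl
      have hq := countP_out_le_countP_npp_of_prefix hT hl hadj (by simp) hb.1 hb.2
        fun a ha hau => by simpa [hgood, hau] using List.mem_takeWhile_imp ha
      have hub : ¬ T u b := fun h => hT u b ⟨h, hb.1⟩
      simp only [List.countP_append, List.countP_cons, hub, hb.2, decide_false]
      omega

open Classical in
theorem snp_of_ncard_sdiff_le [Finite V] (hT : NoDigons T) {l : List V} {u : V}
    (hl : IsMedianOrder T (l ++ [u])) (hadj : (l ++ [u]).Pairwise fun v w => T v w ∨ T w v)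
    (hout : (Nplus T u \ {z | z ∈ l ++ [u]}).ncard ≤ (Npp T u \ {z | z ∈ l ++ [u]}).ncard) :
    SNP T u := by
  have hnodup : (l ++ [u]).Nodup :=
    hadj.imp fun {v w} h hvw => by subst hvw; exact h.elim (hT.irrefl v) (hT.irrefl v)
  have hin :
      (Nplus T u ∩ {z | z ∈ l ++ [u]}).ncard ≤ (Npp T u ∩ {z | z ∈ l ++ [u]}).ncard := by
    rw [hnodup.ncard_inter_setOf_mem, hnodup.ncard_inter_setOf_mem]
    have hu : u ∉ Nplus T u := hT.irrefl u
    have hu' : u ∉ Npp T u := fun h => h.1 rfl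
    convert hl.countP_out_le_countP_npp hT hadj using 1
    · simp only [List.countP_append, List.countP_singleton, hu, decide_false, Bool.false_eq_true,
        if_false, add_zero]
      congr!
    · simp [List.countP_append, hu']
  rw [SNP, ← Set.ncard_inter_add_ncard_sdiff_eq_ncard (Nplus T u) {z | z ∈ l ++ [u]},
    ← Set.ncard_inter_add_ncard_sdiff_eq_ncard (Npp T u) {z | z ∈ l ++ [u]}]
  omega

end IsMedianOrder

end MedianOrder

section TwoStars

variable {A : V → V → Prop} {x y : V}

lemma MissingEdge.symm {u v : V} (h : MissingEdge A u v) : MissingEdge A v u :=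
  ⟨h.1.symm, h.2.2, h.2.1⟩

lemma exists_losesAt_of_edgeLoses {e : Sym2 V} {u v : V} (h : EdgeLoses A e s(u, v)) :
    ∃ p q, MissingEdge A p q ∧ LosesAt A p q u v := by
  obtain ⟨x₁, y₁, x₂, y₂, -, he, hm, -, h₁, h₂, h₃, h₄, h₅, h₆⟩ := h
  rcases Sym2.eq_iff.1 he with ⟨rfl, rfl⟩ | ⟨rfl, rfl⟩
  · exact ⟨x₁, y₁, hm, h₁, h₂, h₃, h₄, h₅, h₆⟩
  · exact ⟨y₁, x₁, hm.symm, h₄, h₅, h₆, h₁, h₂, h₃⟩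

lemma arc_from_y_of_missingEdge_x (hA : NoDigons A) (hxy : A x y)
    (hStar : ∀ u v, MissingEdge A u v → u = x ∨ v = x ∨ u = y ∨ v = y)
    (hIndeg : ∀ u v, MissingEdge A u v → ∃ e : Sym2 V, EdgeLoses A e s(u, v))
    {a : V} (ha : MissingEdge A x a) : A y a := by
  obtain ⟨e, he⟩ := hIndeg x a ha
  obtain ⟨p, q, hpq, hpx, -, -, hqa, -, -⟩ := exists_losesAt_of_edgeLoses he
  rcases hStar p q hpq with rfl | rfl | rfl | rfl
  · exact absurd hpx (hA.irrefl p)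
  · exact absurd hqa ha.2.1
  · exact absurd ⟨hxy, hpx⟩ (hA x p)
  · exact hqa

lemma arc_to_x_of_missingEdge_y (hA : NoDigons A) (hxy : A x y)
    (hStar : ∀ u v, MissingEdge A u v → u = x ∨ v = x ∨ u = y ∨ v = y)
    (hDisj : ∀ v, ¬ (MissingEdge A v x ∧ MissingEdge A v y))
    (hIndeg : ∀ u v, MissingEdge A u v → ∃ e : Sym2 V, EdgeLoses A e s(u, v))
    {b : V} (hb : MissingEdge A y b) : A b x := by
  obtain ⟨e, he⟩ := hIndeg y b hb
  obtain ⟨p, q, hpq, hpy, hpb, -, hqb, hqy, -⟩ := exists_losesAt_of_edgeLoses he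
  rcases hStar p q hpq with rfl | rfl | rfl | rfl
  · by_contra hbx
    have hne : b ≠ p := by rintro rfl; exact hb.2.2 hxy
    exact hDisj b ⟨⟨hne, hbx, hpb⟩, hb.symm⟩
  · exact absurd hxy hqy
  · exact absurd hpy (hA.irrefl p)
  · exact absurd hqb hb.2.1

lemma snp_center_x [Finite V] (hA : NoDigons A) (hxy : A x y)
    (hCover : ∀ v : V, v = x ∨ v = y ∨ MissingEdge A v x ∨ MissingEdge A v y)
    (hyA : ∀ a, MissingEdge A x a → A y a) (hBx : ∀ b, MissingEdge A y b → A b x)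
    {a : V} (ha : MissingEdge A x a) : SNP A x := by
  have hNplus : Nplus A x = {y} := by
    refine Set.eq_singleton_iff_unique_mem.2 ⟨hxy, fun v hxv => ?_⟩
    rcases hCover v with rfl | rfl | hvx | hvy
    · exact absurd hxv (hA.irrefl v)
    · rfl
    · exact absurd hxv hvx.2.2
    · exact absurd ⟨hxv, hBx v hvy.symm⟩ (hA x v)
  rw [SNP, hNplus, Set.ncard_singleton]
  exact (Set.ncard_pos (Set.toFinite _)).2 ⟨a, ha.1.symm, ha.2.1, y, hxy, hyA a ha⟩

lemma ncard_nplus_sdiff_le_ncard_npp_sdiff [Finite V] (hA : NoDigons A) (hxy : A x y)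
    (hyA : ∀ a, MissingEdge A x a → A y a) (hBx : ∀ b, MissingEdge A y b → A b x) {u : V}
    (hu : u ≠ y) (hleaf : MissingEdge A u x ∨ MissingEdge A u y) :
    (Nplus A u \ {z | z ≠ x ∧ z ≠ y}).ncard ≤
      (Npp A u \ {z | z ≠ x ∧ z ≠ y}).ncard := by
  rcases hleaf with hux | huy
  · have hyu := hyA u hux.symm
    suffices Nplus A u \ {z | z ≠ x ∧ z ≠ y} = ∅ by simp [this]
    refine Set.eq_empty_of_forall_notMem fun z ⟨huz, hz⟩ => ?_
    simp only [Set.mem_ofPred_eq, not_and_or, not_not] at hz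
    rcases hz with rfl | rfl
    · exact hux.2.1 huz
    · exact hA u z ⟨huz, hyu⟩
  · have hux := hBx u huy.symm
    calc (Nplus A u \ {z | z ≠ x ∧ z ≠ y}).ncard
        ≤ ({x} : Set V).ncard := by
          refine Set.ncard_le_ncard (fun z ⟨huz, hz⟩ => ?_)
          simp only [Set.mem_ofPred_eq, not_and_or, not_not] at hz
          rcases hz with rfl | rfl
          · rfl
          · exact absurd huz huy.2.1
      _ = 1 := Set.ncard_singleton x
      _ ≤ (Npp A u \ {z | z ≠ x ∧ z ≠ y}).ncard := by
          exact (Set.ncard_pos (Set.toFinite _)).2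
            ⟨y, ⟨hu.symm, huy.2.1, x, hux, hxy⟩, fun h => h.2 rfl⟩

lemma adj_of_ne_centers (hStar : ∀ u v, MissingEdge A u v → u = x ∨ v = x ∨ u = y ∨ v = y)
    {v w : V} (hvw : v ≠ w) (hv : v ≠ x ∧ v ≠ y) (hw : w ≠ x ∧ w ≠ y) :
    A v w ∨ A w v := by
  by_contra h
  rw [not_or] at h
  rcases hStar v w ⟨hvw, h.1, h.2⟩ with rfl | rfl | rfl | rfl <;> simp_all

end TwoStars

theorem tournament_minus_two_covering_stars_two_SNP_general [Fintype V]
    (A : V → V → Prop) (hA : NoDigons A)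
    (x y : V) (hxyArc : A x y)
    -- the missing graph is the disjoint union of two stars with centers x and y:
    (hStar : ∀ u v, MissingEdge A u v → u = x ∨ v = x ∨ u = y ∨ v = y)
    (hDisj : ∀ v, ¬ (MissingEdge A v x ∧ MissingEdge A v y))
    (hxLeaf : ∃ a, MissingEdge A x a)
    -- the two stars cover all of V(D):
    (hCover : ∀ v : V, v = x ∨ v = y ∨ MissingEdge A v x ∨ MissingEdge A v y)
    -- δ(Δ) > 0:
    (hIndeg : ∀ u v, MissingEdge A u v → ∃ e : Sym2 V, EdgeLoses A e s(u, v)) :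
    ∃ v w : V, v ≠ w ∧ SNP A v ∧ SNP A w := by
  classical
  have hyA := fun a => arc_from_y_of_missingEdge_x (a := a) hA hxyArc hStar hIndeg
  have hBx := fun b => arc_to_x_of_missingEdge_y (b := b) hA hxyArc hStar hDisj hIndeg
  obtain ⟨a, ha⟩ := hxLeaf
  obtain ⟨l, hperm, hmed⟩ :=
    exists_perm_isMedianOrder A (Finset.univ.filter fun z => z ≠ x ∧ z ≠ y).toList
  have hmem : ∀ z, z ∈ l ↔ z ≠ x ∧ z ≠ y := by simp [hperm.mem_iff]
  have ha' : a ∈ l := (hmem a).2 ⟨ha.1.symm, by rintro rfl; exact ha.2.1 hxyArc⟩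
  obtain ⟨l, u, rfl⟩ := (List.eq_nil_or_concat' l).resolve_left (List.ne_nil_of_mem ha')
  have hadj : (l ++ [u]).Pairwise fun v w => A v w ∨ A w v :=
    (hperm.nodup_iff.2 (Finset.nodup_toList _)).pairwise_of_forall_ne fun v hv w hw hvw =>
      adj_of_ne_centers hStar hvw ((hmem v).1 hv) ((hmem w).1 hw)
  obtain ⟨hux, huy⟩ := (hmem u).1 (by simp)
  refine ⟨x, u, fun h => hux h.symm, snp_center_x hA hxyArc hCover hyA hBx ha,
    hmed.snp_of_ncard_sdiff_le hA hadj ?_⟩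
  rw [show {z | z ∈ l ++ [u]} = {z | z ≠ x ∧ z ≠ y} from Set.ext hmem]
  refine ncard_nplus_sdiff_le_ncard_npp_sdiff hA hxyArc hyA hBx huy ?_
  simpa [hux, huy] using hCover u

/-- a digraph obtained from a tournament by deleting the edges of
two disjoint stars with centers `x → y` which together cover all vertices, in
which every missing edge has positive in-degree and positive out-degree in the
dependency digraph, has at least two vertices with the SNP. -/
theorem tournament_minus_two_covering_stars_two_SNP [Fintype V]
    (A : V → V → Prop) (hA : NoDigons A)
    (x y : V) (hxy : x ≠ y) (hxyArc : A x y)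
    -- the missing graph is the disjoint union of two stars with centers x and y:
    (hStar : ∀ u v, MissingEdge A u v → u = x ∨ v = x ∨ u = y ∨ v = y)
    (hDisj : ∀ v, ¬ (MissingEdge A v x ∧ MissingEdge A v y))
    (hxLeaf : ∃ a, MissingEdge A x a) (hyLeaf : ∃ b, MissingEdge A y b)
    -- the two stars cover all of V(D):
    (hCover : ∀ v : V, v = x ∨ v = y ∨ MissingEdge A v x ∨ MissingEdge A v y)
    -- δ(Δ) > 0:
    (hIndeg : ∀ u v, MissingEdge A u v → ∃ e : Sym2 V, EdgeLoses A e s(u, v))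
    (hOutdeg : ∀ u v, MissingEdge A u v → ∃ e : Sym2 V, EdgeLoses A s(u, v) e) :
    ∃ v w : V, v ≠ w ∧ SNP A v ∧ SNP A w :=
  tournament_minus_two_covering_stars_two_SNP_general A hA x y hxyArc hStar hDisj hxLeaf hCover
    hIndeg
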